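/- Assume Σ_{i∈I} θ_i α_i = 0 and θ is nondegenerate with respect to α. Then there exists a rational T₀ > 0 (depending on r, a, b, α, θ) such that for every rational T ≥ T₀ and every representation B of the preprojective algebra on an I-graded space (V_i) with dim V_i = α_i for all i: B is θ-stable if and only if the induced graded representation Ind(B) (on the I×{a,…,b}-graded space with all graded pieces V_{i,n} = V_i) is θ^gtr-stable. -/

import Mathlib

noncomputable section

open Module

/-- Cast of components of a family of `ℂ`-vector spaces along an equality of indices. -/
def lcast {I : Type} (V : I → Type) [∀ i, AddCommGroup (V i)] [∀ i, Module ℂ (V i)]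
    {i j : I} (hij : i = j) : V i ≃ₗ[ℂ] V j := by
  subst hij; exact LinearEquiv.refl ℂ (V i)

/-- `θ^lg(m) + θ^mid(m) + θ^sm(m)` for a function `m` on `I × {a,…,b}`,
where `I = {1,…,r} ∪ {∞}` is encoded as `Option (Fin r)` (`none = ∞`). -/
def thetaAux (r : ℕ) (a b : ℤ) (T : ℚ) (θ : Option (Fin r) → ℤ)
    (m : Option (Fin r) → ℤ → ℤ) : ℚ :=
  (T ^ (r + 1) * ((m none b - m none a : ℤ) : ℚ)
      + ∑ i : Fin r, T ^ ((i : ℕ) + 1) * ((m (some i) b - m (some i) a : ℤ) : ℚ))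
  + (∑ i : Option (Fin r), (θ i : ℚ) * ((m i a : ℤ) : ℚ))
  + (-(∑ i : Fin r, T ^ (-(((i : ℕ) : ℤ) + 1)) * ((m (some i) a : ℤ) : ℚ))
      + T ^ (-(r : ℤ) - 1) * ∑ i : Option (Fin r), ∑ n ∈ Finset.Ioo a b, ((m i n : ℤ) : ℚ))

/-- `θ^gtr(m) = θ^lg(m) + θ^mid(m) + θ^sm(m) − C·m_{∞,a}`. -/
def thetaGtr (r : ℕ) (a b : ℤ) (T : ℚ) (θ : Option (Fin r) → ℤ)
    (α : Option (Fin r) → ℕ) (m : Option (Fin r) → ℤ → ℤ) : ℚ :=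
  thetaAux r a b T θ m
    - thetaAux r a b T θ (fun i _ => (α i : ℤ)) * ((m none a : ℤ) : ℚ)

/-! For a constant-in-`n` dimension function the large part `θ^lg` vanishes, the middle part
is the pairing with `θ`, and the small part together with the correction `C·m_{∞,a}` is `O(1/T)`
(`C` is itself `O(1/T)` because `θ(α) = 0`).  So for `T ≫ 0` the value of `θ^gtr` is within
`1` of an integer `θ(β)`, which for a proper nonzero `β ≤ α` is nonzero by nondegeneracy; hence
it has the sign of `θ(β)`.  A graded subrepresentation of `Ind(B)` whose dimensions do not jump
between `a` and `b` is constant, i.e. comes from a subrepresentation of `B`; if some dimension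
does jump, `θ^lg ≥ T` dominates everything else. -/

open Finset

def thetaLg (r : ℕ) (a b : ℤ) (T : ℚ) (m : Option (Fin r) → ℤ → ℤ) : ℚ :=
  T ^ (r + 1) * ((m none b - m none a : ℤ) : ℚ)
    + ∑ i : Fin r, T ^ ((i : ℕ) + 1) * ((m (some i) b - m (some i) a : ℤ) : ℚ)

def thetaMid (r : ℕ) (a : ℤ) (θ : Option (Fin r) → ℤ) (m : Option (Fin r) → ℤ → ℤ) : ℚ :=
  ∑ i : Option (Fin r), (θ i : ℚ) * ((m i a : ℤ) : ℚ)

def thetaSm (r : ℕ) (a b : ℤ) (T : ℚ) (m : Option (Fin r) → ℤ → ℤ) : ℚ :=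
  -(∑ i : Fin r, T ^ (-(((i : ℕ) : ℤ) + 1)) * ((m (some i) a : ℤ) : ℚ))
    + T ^ (-(r : ℤ) - 1) * ∑ i : Option (Fin r), ∑ n ∈ Ioo a b, ((m i n : ℤ) : ℚ)

def thetaSmBound {r : ℕ} (a b : ℤ) (α : Option (Fin r) → ℕ) : ℚ :=
  (#(Ioo a b) + 1) * ∑ i, (α i : ℚ)

/-- The `T₀` of the theorem: `|θ^mid(m)| ≤ ∑ |θ i| α i`, and `T · |θ^sm(m) - C·m_{∞,a}|` is at most
`thetaSmBound a b α * (1 + α ∞)`. -/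
def gtrThreshold {r : ℕ} (a b : ℤ) (θ : Option (Fin r) → ℤ) (α : Option (Fin r) → ℕ) : ℚ :=
  ∑ i, |(θ i : ℚ)| * α i + thetaSmBound a b α * (1 + α none) + 1

theorem pos_iff_of_abs_sub_intCast_lt_one {R : Type*} [CommRing R] [LinearOrder R]
    [IsStrictOrderedRing R] {x : R} {k : ℤ} (h : |x - k| < 1) (hk : k ≠ 0) : 0 < x ↔ 0 < k := by
  obtain ⟨h₁, h₂⟩ := abs_lt.1 h
  rcases lt_or_gt_of_ne hk with hk | hk
  · have : (k : R) ≤ -1 := by exact_mod_cast Int.le_sub_one_of_lt hk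
    constructor <;> intro <;> linarith
  · have : (1 : R) ≤ k := by exact_mod_cast hk
    constructor <;> intro <;> linarith

section Estimates

variable {r : ℕ} {a b : ℤ} {T : ℚ} {θ : Option (Fin r) → ℤ} {α : Option (Fin r) → ℕ}

theorem thetaSmBound_nonneg : 0 ≤ thetaSmBound a b α := by
  unfold thetaSmBound; positivity

theorem thetaAux_eq_add (m : Option (Fin r) → ℤ → ℤ) :
    thetaAux r a b T θ m = thetaLg r a b T m + thetaMid r a θ m + thetaSm r a b T m :=
  rfl

theorem thetaLg_eq_zero {m : Option (Fin r) → ℤ → ℤ} (h : ∀ i, m i a = m i b) :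
    thetaLg r a b T m = 0 := by
  simp [thetaLg, h]

theorem le_thetaLg (hT : 1 ≤ T) {m : Option (Fin r) → ℤ → ℤ} (hmono : ∀ i, m i a ≤ m i b)
    (hjump : ∃ i, m i a < m i b) : T ≤ thetaLg r a b T m := by
  obtain ⟨j, hj⟩ := hjump
  set e : Option (Fin r) → ℕ := fun i => i.elim (r + 1) fun k => (k : ℕ) + 1
  have hsum : thetaLg r a b T m = ∑ i, T ^ e i * ((m i b - m i a : ℤ) : ℚ) := by
    rw [Fintype.sum_option]; rfl
  have hterm : ∀ i, 0 ≤ T ^ e i * ((m i b - m i a : ℤ) : ℚ) := fun i =>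
    mul_nonneg (by positivity) (by exact_mod_cast sub_nonneg.2 (hmono i))
  have he : 1 ≤ e j := by cases j <;> simp [e]
  calc T ≤ T ^ e j * 1 := by simpa using le_self_pow₀ hT (by omega)
    _ ≤ T ^ e j * ((m j b - m j a : ℤ) : ℚ) := by gcongr; exact_mod_cast (by omega)
    _ ≤ thetaLg r a b T m := hsum ▸ single_le_sum (fun i _ => hterm i) (mem_univ j)

theorem neg_le_thetaMid {d : Option (Fin r) → ℤ → ℕ} (hd : ∀ i n, d i n ≤ α i) :
    -∑ i, |(θ i : ℚ)| * α i ≤ thetaMid r a θ (fun i n => d i n) := by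
  refine neg_le_of_abs_le ((abs_sum_le_sum_abs _ _).trans (sum_le_sum fun i _ => ?_))
  rw [abs_mul]
  gcongr
  simpa using hd i a

theorem abs_thetaSm_le (hT : 1 ≤ T) {d : Option (Fin r) → ℤ → ℕ} (hd : ∀ i n, d i n ≤ α i) :
    |thetaSm r a b T (fun i n => d i n)| ≤ T⁻¹ * thetaSmBound a b α := by
  have hpow {k : ℤ} (hk : k ≤ -1) : T ^ k ≤ T⁻¹ := by
    simpa using zpow_le_zpow_right₀ hT hk
  have hα : ∑ i : Fin r, (α (some i) : ℚ) ≤ ∑ i, (α i : ℚ) := by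
    rw [Fintype.sum_option]; simp
  set P := ∑ i : Fin r, T ^ (-(((i : ℕ) : ℤ) + 1)) * ((d (some i) a : ℤ) : ℚ)
  set Q := T ^ (-(r : ℤ) - 1) * ∑ i, ∑ n ∈ Ioo a b, ((d i n : ℤ) : ℚ) with hQ_def
  have hP : P ≤ T⁻¹ * ∑ i, (α i : ℚ) :=
    calc P ≤ ∑ i : Fin r, T⁻¹ * (α (some i) : ℚ) :=
          sum_le_sum fun i _ => by gcongr; exacts [hpow (by omega), by simpa using hd _ _]
      _ ≤ T⁻¹ * ∑ i, (α i : ℚ) := by rw [← mul_sum]; gcongr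
  have hQ : Q ≤ T⁻¹ * (#(Ioo a b) * ∑ i, (α i : ℚ)) := by
    rw [hQ_def]
    gcongr
    · exact hpow (by omega)
    · rw [mul_sum]
      refine sum_le_sum fun i _ => ?_
      simpa using sum_le_card_nsmul (Ioo a b) (fun n => (d i n : ℚ)) (α i)
        fun n _ => by exact_mod_cast hd i n
  have hP0 : 0 ≤ P := by positivity
  have hQ0 : 0 ≤ Q := by positivity
  change |-P + Q| ≤ _
  rw [abs_le, thetaSmBound]
  constructor <;> nlinarith

theorem thetaAux_const_of_pairing_eq_zero (hθ0 : ∑ i, θ i * (α i : ℤ) = 0) :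
    thetaAux r a b T θ (fun i _ => (α i : ℤ)) = thetaSm r a b T (fun i _ => (α i : ℤ)) := by
  have hmid : thetaMid r a θ (fun i _ => (α i : ℤ)) = 0 := by
    simpa [thetaMid] using congrArg (Int.cast : ℤ → ℚ) hθ0
  rw [thetaAux_eq_add, thetaLg_eq_zero (m := fun i _ => (α i : ℤ)) fun _ => rfl, hmid,
    zero_add, zero_add]

theorem abs_thetaGtr_sub_le (hθ0 : ∑ i, θ i * (α i : ℤ) = 0) (hT : 1 ≤ T)
    {d : Option (Fin r) → ℤ → ℕ} (hd : ∀ i n, d i n ≤ α i) :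
    |thetaGtr r a b T θ α (fun i n => d i n)
        - (thetaLg r a b T (fun i n => d i n) + thetaMid r a θ (fun i n => d i n))|
      ≤ T⁻¹ * (thetaSmBound a b α * (1 + α none)) := by
  have hsm := abs_thetaSm_le (a := a) (b := b) hT hd
  have hC := abs_thetaSm_le (a := a) (b := b) hT (d := fun i _ => α i) fun _ _ => le_rfl
  have hd0 : |((d none a : ℤ) : ℚ)| ≤ α none := by simpa using hd none a
  rw [thetaGtr, thetaAux_const_of_pairing_eq_zero hθ0, thetaAux_eq_add]
  calc _ = |thetaSm r a b T (fun i n => d i n)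
          - thetaSm r a b T (fun i _ => (α i : ℤ)) * ((d none a : ℤ) : ℚ)| := by ring_nf
    _ ≤ |thetaSm r a b T (fun i n => d i n)|
          + |thetaSm r a b T (fun i _ => (α i : ℤ))| * |((d none a : ℤ) : ℚ)| := by
        rw [← abs_mul]; exact abs_sub _ _
    _ ≤ T⁻¹ * thetaSmBound a b α + T⁻¹ * thetaSmBound a b α * α none := by
        gcongr
        exact mul_nonneg (by positivity) thetaSmBound_nonneg
    _ = T⁻¹ * (thetaSmBound a b α * (1 + α none)) := by ring

theorem one_le_gtrThreshold : 1 ≤ gtrThreshold a b θ α := by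
  have : 0 ≤ ∑ i, |(θ i : ℚ)| * α i := by positivity
  have : 0 ≤ thetaSmBound a b α * (1 + α none) := mul_nonneg thetaSmBound_nonneg (by positivity)
  unfold gtrThreshold
  linarith

theorem thetaGtr_pos_of_jump (hθ0 : ∑ i, θ i * (α i : ℤ) = 0) (hT : gtrThreshold a b θ α ≤ T)
    {d : Option (Fin r) → ℤ → ℕ} (hd : ∀ i n, d i n ≤ α i) (hmono : ∀ i, d i a ≤ d i b)
    (hjump : ∃ i, d i a < d i b) :
    0 < thetaGtr r a b T θ α (fun i n => d i n) := by
  have hT1 : 1 ≤ T := one_le_gtrThreshold.trans hT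
  have hlg := le_thetaLg hT1 (m := fun i n => d i n) (fun i => by simpa using hmono i)
    (by simpa using hjump)
  have hmid := neg_le_thetaMid (θ := θ) (a := a) hd
  have herr := (abs_le.1 (abs_thetaGtr_sub_le (a := a) (b := b) hθ0 hT1 hd)).1
  have hE : T⁻¹ * (thetaSmBound a b α * (1 + α none)) ≤ thetaSmBound a b α * (1 + α none) :=
    mul_le_of_le_one_left (mul_nonneg thetaSmBound_nonneg (by positivity))
      (inv_le_one_of_one_le₀ hT1)
  unfold gtrThreshold at hT
  linarith

theorem abs_thetaGtr_sub_thetaMid_lt_one (hθ0 : ∑ i, θ i * (α i : ℤ) = 0)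
    (hT : gtrThreshold a b θ α ≤ T) {d : Option (Fin r) → ℤ → ℕ} (hd : ∀ i n, d i n ≤ α i)
    (hconst : ∀ i, d i a = d i b) :
    |thetaGtr r a b T θ α (fun i n => d i n) - thetaMid r a θ (fun i n => d i n)| < 1 := by
  have hT1 : 1 ≤ T := one_le_gtrThreshold.trans hT
  have herr := abs_thetaGtr_sub_le (a := a) (b := b) hθ0 hT1 hd
  rw [thetaLg_eq_zero (by simpa using hconst), zero_add] at herr
  refine herr.trans_lt ?_
  rw [inv_mul_lt_one₀ (by linarith)]
  have : 0 ≤ ∑ i, |(θ i : ℚ)| * α i := by positivity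
  unfold gtrThreshold at hT
  linarith

theorem thetaGtr_pos_iff_of_const (hθ0 : ∑ i, θ i * (α i : ℤ) = 0)
    (hT : gtrThreshold a b θ α ≤ T) {d : Option (Fin r) → ℤ → ℕ} (hd : ∀ i n, d i n ≤ α i)
    (hconst : ∀ i, d i a = d i b) (hk : ∑ i, θ i * (d i a : ℤ) ≠ 0) :
    0 < thetaGtr r a b T θ α (fun i n => d i n) ↔ 0 < ∑ i, (θ i : ℚ) * d i a := by
  have hmid : thetaMid r a θ (fun i n => d i n) = ((∑ i, θ i * (d i a : ℤ) : ℤ) : ℚ) := by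
    simp [thetaMid]
  have h := abs_thetaGtr_sub_thetaMid_lt_one hθ0 hT hd hconst
  rw [hmid] at h
  rw [pos_iff_of_abs_sub_intCast_lt_one h hk]
  norm_cast

end Estimates

section Representations

variable {K : Type*} [Field K] {r : ℕ} {V : Option (Fin r) → Type*} [∀ i, AddCommGroup (V i)]
  [∀ i, Module K (V i)] {H : Type*} {s t : H → Option (Fin r)}

def IsThetaStable (θ : Option (Fin r) → ℤ) (B : ∀ h, V (s h) →ₗ[K] V (t h)) : Prop :=
  ∀ S : ∀ i, Submodule K (V i), (∀ h, (S (s h)).map (B h) ≤ S (t h)) →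
    (∃ i, S i ≠ ⊥) → (∃ i, S i ≠ ⊤) → 0 < ∑ i, (θ i : ℚ) * (finrank K (S i) : ℚ)

/-- `θ^gtr`-stability of `Ind(B)`. A graded subrepresentation is encoded as a family of subspaces
`M i n ≤ V i` indexed by all `n : ℤ`, of which only those with `a ≤ n ≤ b` matter. -/
def IsThetaGtrStable (a b : ℤ) (T : ℚ) (θ : Option (Fin r) → ℤ) (α : Option (Fin r) → ℕ)
    (B : ∀ h, V (s h) →ₗ[K] V (t h)) : Prop :=
  ∀ M : ∀ i, ℤ → Submodule K (V i),
    (∀ h, ∀ n ∈ Icc a (b - 1), (M (s h) n).map (B h) ≤ M (t h) (n + 1)) →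
    (∀ i, ∀ n ∈ Icc a (b - 1), M i n ≤ M i (n + 1)) →
    (∃ i, ∃ n ∈ Icc a b, M i n ≠ ⊥) →
    (∃ i, ∃ n ∈ Icc a b, M i n ≠ ⊤) →
    0 < thetaGtr r a b T θ α (fun i n => (finrank K (M i n) : ℤ))

variable [∀ i, FiniteDimensional K (V i)] {a b : ℤ} {T : ℚ} {θ : Option (Fin r) → ℤ}
  {α : Option (Fin r) → ℕ} {B : ∀ h, V (s h) →ₗ[K] V (t h)}

theorem IsThetaStable.isThetaGtrStable (hab : a < b) (hθ0 : ∑ i, θ i * (α i : ℤ) = 0)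
    (hT : gtrThreshold a b θ α ≤ T) (hdim : ∀ i, finrank K (V i) = α i)
    (hB : IsThetaStable θ B) : IsThetaGtrStable a b T θ α B := by
  intro M hMB hM hne hnt
  have hd : ∀ i n, finrank K (M i n) ≤ α i := fun i n => hdim i ▸ Submodule.finrank_le _
  have hmono : ∀ i, MonotoneOn (M i) (Set.Icc a b) := fun i =>
    monotoneOn_of_le_add_one Set.ordConnected_Icc fun n _ hn hn1 =>
      hM i n (mem_Icc.2 ⟨hn.1, by linarith [hn1.2]⟩)
  have ha : a ∈ Set.Icc a b := ⟨le_rfl, hab.le⟩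
  have hb : b ∈ Set.Icc a b := ⟨hab.le, le_rfl⟩
  by_cases hjump : ∃ i, finrank K (M i a) < finrank K (M i b)
  · exact thetaGtr_pos_of_jump hθ0 hT hd
      (fun i => Submodule.finrank_mono (hmono i ha hb hab.le)) hjump
  simp only [not_exists, not_lt] at hjump
  have hconst : ∀ i, ∀ n ∈ Set.Icc a b, M i n = M i a := fun i n hn =>
    (Submodule.eq_of_le_of_finrank_le (hmono i ha hn hn.1)
      ((Submodule.finrank_mono (hmono i hn hb hn.2)).trans (hjump i))).symm
  have hsub : ∀ h, (M (s h) a).map (B h) ≤ M (t h) a := fun h =>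
    hconst (t h) (a + 1) ⟨by omega, by omega⟩ ▸ hMB h a (mem_Icc.2 ⟨le_rfl, by omega⟩)
  have hS := hB (fun i => M i a) hsub
    (by obtain ⟨i, n, hn, hi⟩ := hne; exact ⟨i, hconst i n (mem_Icc.1 hn) ▸ hi⟩)
    (by obtain ⟨i, n, hn, hi⟩ := hnt; exact ⟨i, hconst i n (mem_Icc.1 hn) ▸ hi⟩)
  refine (thetaGtr_pos_iff_of_const hθ0 hT hd
    (fun i => by rw [hconst i b hb]) ?_).2 hS
  exact_mod_cast hS.ne'

theorem IsThetaGtrStable.isThetaStable (hab : a ≤ b) (hθ0 : ∑ i, θ i * (α i : ℤ) = 0)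
    (hnd : ∀ β : Option (Fin r) → ℕ, (∀ i, β i ≤ α i) →
      β ≠ 0 → β ≠ α → ∑ i, θ i * (β i : ℤ) ≠ 0)
    (hT : gtrThreshold a b θ α ≤ T) (hdim : ∀ i, finrank K (V i) = α i)
    (hB : IsThetaGtrStable a b T θ α B) : IsThetaStable θ B := by
  intro S hS hne hnt
  have hd : ∀ i, finrank K (S i) ≤ α i := fun i => hdim i ▸ Submodule.finrank_le _
  have hk : ∑ i, θ i * (finrank K (S i) : ℤ) ≠ 0 := by
    refine hnd _ hd ?_ ?_
    · obtain ⟨i, hi⟩ := hne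
      exact fun h0 => hi (Submodule.finrank_eq_zero.1 (congrFun h0 i))
    · obtain ⟨i, hi⟩ := hnt
      exact fun hα => hi (Submodule.eq_top_of_finrank_eq ((congrFun hα i).trans (hdim i).symm))
  have ha : a ∈ Icc a b := left_mem_Icc.2 hab
  refine (thetaGtr_pos_iff_of_const (d := fun i _ => finrank K (S i)) hθ0 hT
    (fun i _ => hd i) (fun _ => rfl) hk).1 ?_
  exact hB (fun i _ => S i) (fun h _ _ => hS h) (fun _ _ _ => le_rfl)
    (by obtain ⟨i, hi⟩ := hne; exact ⟨i, a, ha, hi⟩)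
    (by obtain ⟨i, hi⟩ := hnt; exact ⟨i, a, ha, hi⟩)

end Representations

theorem stmt8 (r : ℕ) (a b : ℤ) (hab : a < b)
    (α : Option (Fin r) → ℕ)
    (θ : Option (Fin r) → ℤ)
    (hθ0 : ∑ i : Option (Fin r), θ i * (α i : ℤ) = 0)
    (hnd : ∀ β : Option (Fin r) → ℕ, (∀ i, β i ≤ α i) →
      β ≠ 0 → β ≠ α → ∑ i : Option (Fin r), θ i * (β i : ℤ) ≠ 0) :
    ∃ T₀ : ℚ, 0 < T₀ ∧ ∀ T : ℚ, T₀ ≤ T →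
    ∀ (H : Type) (_ : Fintype H) (s t : H → Option (Fin r)) (bar : H → H)
      (bar_invol : ∀ h, bar (bar h) = h), (∀ h, bar h ≠ h) →
    ∀ (s_bar : ∀ h, s (bar h) = t h) (t_bar : ∀ h, t (bar h) = s h)
      (eps : H → ℤ), (∀ h, eps h = 1 ∨ eps h = -1) → (∀ h, eps (bar h) = - eps h) →
    ∀ (V : Option (Fin r) → Type)
      (_ : ∀ i, AddCommGroup (V i)),
      ∀ (_ : ∀ i, Module ℂ (V i)) (_ : ∀ i, FiniteDimensional ℂ (V i)),
      (∀ i, finrank ℂ (V i) = α i) →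
      ∀ B : ∀ h, V (s h) →ₗ[ℂ] V (t h),
      -- B satisfies the preprojective relation
      (∀ k, (∑ h : H, if hk : s h = k then
          (eps h : ℂ) • ((lcast V ((t_bar h).trans hk)).toLinearMap ∘ₗ B (bar h)
            ∘ₗ (lcast V (s_bar h)).symm.toLinearMap ∘ₗ B h
            ∘ₗ (lcast V hk).symm.toLinearMap) else 0) = 0) →
      -- B is θ-stable ↔ Ind(B) is θ^gtr-stable
      ((∀ S : ∀ i, Submodule ℂ (V i),
          (∀ h, (S (s h)).map (B h) ≤ S (t h)) →
          (∃ i, S i ≠ ⊥) → (∃ i, S i ≠ ⊤) →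
          0 < ∑ i : Option (Fin r), (θ i : ℚ) * (finrank ℂ (S i) : ℚ))
        ↔
        (∀ M : ∀ (i : Option (Fin r)), ℤ → Submodule ℂ (V i),
          (∀ h, ∀ n ∈ Finset.Icc a (b - 1), (M (s h) n).map (B h) ≤ M (t h) (n + 1)) →
          (∀ i, ∀ n ∈ Finset.Icc a (b - 1), M i n ≤ M i (n + 1)) →
          (∃ i, ∃ n ∈ Finset.Icc a b, M i n ≠ ⊥) →
          (∃ i, ∃ n ∈ Finset.Icc a b, M i n ≠ ⊤) →
          0 < thetaGtr r a b T θ α (fun i n => (finrank ℂ (M i n) : ℤ)))) := by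
  refine ⟨gtrThreshold a b θ α, one_pos.trans_le one_le_gtrThreshold, ?_⟩
  intro T hT _ _ _ _ _ _ _ _ _ _ _ _ _ _ _ _ hdim _ _
  exact ⟨IsThetaStable.isThetaGtrStable hab hθ0 hT hdim,
    IsThetaGtrStable.isThetaStable hab.le hθ0 hnd hT hdim⟩
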